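/- arXiv:cs/0412085 — 9 statements merged into one kernel-verified Lean document; each statement's English description precedes it below -/
import Mathlib

section
/- Let q be a prime power, F = F_q, n a positive integer with n ≤ q−1, and 0 ≤ δ ≤ n−1. Let α ∈ F have multiplicative order at least n. Then the polynomials g_j(z) = Σ_{ν=0}^{δ} (α^j z)^ν for j = 0,…,n−1 have no common root in any field extension of F; equivalently, their gcd in F[z] is 1. -/
open Polynomial

/-! If `x` were a common root of the `g_j` (in an algebraic closure), then by the symmetry
`g_j(x) = Σ_ν (x · α^j)^ν`, the polynomial `h(t) = Σ_{ν ≤ δ} (x t)^ν` of degree `δ < n` would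
vanish at the `n` distinct points `α^j`, `j < n`; but its constant coefficient is `1`. -/

theorem Finset.gcd_eq_one_of_forall_exists_aeval_ne_zero {ι F K : Type*} [Field F]
    [DecidableEq F] [Field K] [IsAlgClosed K] [Algebra F K] (s : Finset ι) (f : ι → F[X])
    (h : ∀ x : K, ∃ i ∈ s, aeval x (f i) ≠ 0) : s.gcd f = 1 := by
  rw [← Finset.normalize_gcd, normalize_eq_one]
  by_contra hunit
  have hdeg : (s.gcd f).degree ≠ 0 := mt isUnit_iff_degree_eq_zero.mpr hunit
  obtain ⟨x, hx⟩ := IsAlgClosed.exists_aeval_eq_zero K (s.gcd f) hdeg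
  obtain ⟨i, hi, hfi⟩ := h x
  obtain ⟨c, hc⟩ := Finset.gcd_dvd (f := f) hi
  exact hfi (by rw [hc, map_mul, hx, zero_mul])

theorem Polynomial.eq_zero_of_eval_pow_eq_zero {R : Type*} [CommRing R] [IsDomain R]
    (p : R[X]) {β : R} {n : ℕ} (hβ : n ≤ orderOf β) (hp : p.natDegree < n)
    (h : ∀ j < n, p.eval (β ^ j) = 0) : p = 0 := by
  refine eq_zero_of_natDegree_lt_card_of_eval_eq_zero p (f := fun j : Fin n => β ^ (j : ℕ))
    ?_ (fun j => h j j.isLt) (by simpa using hp)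
  intro i j hij
  exact Fin.ext <| pow_injOn_Iio_orderOf (Set.mem_Iio.mpr (i.isLt.trans_le hβ))
    (Set.mem_Iio.mpr (j.isLt.trans_le hβ)) hij

section GeometricSum

variable {R : Type*} [CommRing R]

theorem Polynomial.eval_sum_C_mul_X_pow (a b : R) (m : ℕ) :
    (∑ ν ∈ Finset.range m, (C a * X) ^ ν).eval b = ∑ ν ∈ Finset.range m, (a * b) ^ ν := by
  simp [eval_finsetSum]

theorem Polynomial.aeval_sum_C_mul_X_pow {A : Type*} [CommRing A] [Algebra R A] (a : R) (b : A)
    (m : ℕ) :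
    aeval b (∑ ν ∈ Finset.range m, (C a * X) ^ ν) =
      ∑ ν ∈ Finset.range m, (algebraMap R A a * b) ^ ν := by
  simp [map_sum]

theorem Polynomial.natDegree_sum_C_mul_X_pow_le (a : R) (m : ℕ) :
    (∑ ν ∈ Finset.range (m + 1), (C a * X) ^ ν).natDegree ≤ m := by
  refine natDegree_sum_le_of_forall_le _ _ fun ν hν => ?_
  rw [mul_pow, ← C_pow]
  exact (natDegree_C_mul_X_pow_le _ ν).trans (Nat.lt_succ_iff.mp (Finset.mem_range.mp hν))

theorem Polynomial.sum_C_mul_X_pow_ne_zero [Nontrivial R] (a : R) (m : ℕ) :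
    ∑ ν ∈ Finset.range (m + 1), (C a * X) ^ ν ≠ 0 := by
  intro h
  have h0 := congrArg (eval 0) h
  rw [eval_sum_C_mul_X_pow, Finset.sum_range_succ'] at h0
  simp at h0

end GeometricSum

theorem stmt0_general (F : Type*) [Field F] [DecidableEq F] (n δ : ℕ)
    (hn : 0 < n) (hδ : δ ≤ n - 1)
    (α : F) (hord : n ≤ orderOf α) :
    (Finset.range n).gcd
      (fun j => ∑ ν ∈ Finset.range (δ + 1), (Polynomial.C (α ^ j) * Polynomial.X) ^ ν) = 1 := by
  refine Finset.gcd_eq_one_of_forall_exists_aeval_ne_zero (K := AlgebraicClosure F) _ _ fun x => ?_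
  by_contra! hroot
  have hβ : n ≤ orderOf (algebraMap F (AlgebraicClosure F) α) :=
    (orderOf_injective (algebraMap F (AlgebraicClosure F)).toMonoidHom
      (algebraMap F _).injective α).symm ▸ hord
  refine sum_C_mul_X_pow_ne_zero x δ (eq_zero_of_eval_pow_eq_zero _ hβ
    ((natDegree_sum_C_mul_X_pow_le x δ).trans_lt (by omega)) fun j hj => ?_)
  rw [eval_sum_C_mul_X_pow, ← hroot j (Finset.mem_range.mpr hj), aeval_sum_C_mul_X_pow, map_pow]
  simp_rw [mul_comm x]

/-- For a finite field `F` of prime-power cardinality `q`, `n ≤ q - 1`,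
`0 ≤ δ ≤ n - 1`, and `α ∈ F` of multiplicative order at least `n`, the polynomials
`g_j(z) = Σ_{ν=0}^{δ} (α^j z)^ν`, `j = 0, …, n-1`, have gcd `1` in `F[z]`
(equivalently, no common root in any field extension). -/
theorem stmt0 (F : Type*) [Field F] [Fintype F] [DecidableEq F] (q n δ : ℕ)
    (hq : IsPrimePow q) (hcard : Fintype.card F = q)
    (hn : 0 < n) (hnq : n ≤ q - 1) (hδ : δ ≤ n - 1)
    (α : F) (hord : n ≤ orderOf α) :
    (Finset.range n).gcd
      (fun j => ∑ ν ∈ Finset.range (δ + 1), (Polynomial.C (α ^ j) * Polynomial.X) ^ ν) = 1 :=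
  stmt0_general F n δ hn hδ α hord
end

section
/- Let F be a field and α ∈ F a nonzero element of multiplicative order at least n. For 0 ≤ s ≤ s+r ≤ n−1, the (r+1)×n matrix R with rows (1, α^{s+i}, α^{2(s+i)}, …, α^{(n−1)(s+i)}) for i = 0,…,r generates an MDS block code: every nonzero F-linear combination of the rows of R has Hamming weight at least n−r. -/
/-!
Writing `β = α ^ j`, the `j`-th coordinate of `∑ i, u i • R i` is `β ^ s * p(β)` with
`p = ∑ i, u i X ^ i` a nonzero polynomial of degree at most `r`. Since `β ≠ 0`, the
coordinate vanishes only when `β` is a root of `p`, and the order hypothesis makes the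
`n` points `α ^ j` distinct, so at most `r` coordinates vanish.
-/

open Polynomial Finset

theorem pow_injOn_Iio_of_pow_ne_one {G₀ : Type*} [GroupWithZero G₀] {a : G₀} {n : ℕ}
    (ha : a ≠ 0) (h : ∀ m : ℕ, 0 < m → m < n → a ^ m ≠ 1) :
    (Set.Iio n).InjOn (a ^ ·) := by
  have key : ∀ j k : ℕ, j < k → k < n → a ^ j ≠ a ^ k := by
    intro j k hjk hk hpow
    refine h (k - j) (by omega) (by omega) ?_
    rw [pow_sub₀ a ha hjk.le, ← hpow, mul_inv_cancel₀ (pow_ne_zero j ha)]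
  intro j hj k hk hpow
  by_contra hne
  rcases Nat.lt_or_gt_of_ne hne with hlt | hlt
  · exact key j k hlt hk hpow
  · exact key k j hlt hj hpow.symm

namespace Polynomial

theorem eval_ofFn {R : Type*} [CommSemiring R] [DecidableEq R] {m : ℕ} (v : Fin m → R)
    (x : R) : (ofFn m v).eval x = ∑ i : Fin m, v i * x ^ (i : ℕ) := by
  simp only [ofFn_eq_sum_monomial, eval_finsetSum, eval_monomial]

theorem card_filter_eval_eq_zero_le {R ι : Type*} [CommRing R] [IsDomain R] [DecidableEq R]
    [Fintype ι] {p : R[X]} (hp : p ≠ 0) {x : ι → R} (hx : Function.Injective x) :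
    #{j | p.eval (x j) = 0} ≤ p.natDegree := by
  rw [← card_image_of_injective _ hx]
  refine card_le_degree_of_subset_roots fun y hy => ?_
  obtain ⟨j, hj, rfl⟩ := mem_image.1 hy
  exact (mem_roots hp).2 (mem_filter.1 hj).2

theorem card_sub_natDegree_le_card_filter_eval_ne_zero {R ι : Type*} [CommRing R] [IsDomain R]
    [DecidableEq R] [Fintype ι] {p : R[X]} (hp : p ≠ 0) {x : ι → R}
    (hx : Function.Injective x) :
    Fintype.card ι - p.natDegree ≤ #{j | p.eval (x j) ≠ 0} := by
  have hsplit := card_filter_add_card_filter_not (s := univ) (fun j => p.eval (x j) ≠ 0)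
  simp only [not_not, card_univ] at hsplit
  have := card_filter_eval_eq_zero_le hp hx
  omega

end Polynomial

theorem sum_mul_pow_add_eq_pow_mul_eval_ofFn {R : Type*} [CommSemiring R] [DecidableEq R]
    {m : ℕ} (v : Fin m → R) (s : ℕ) (x : R) :
    ∑ i : Fin m, v i * x ^ (s + (i : ℕ)) = x ^ s * (ofFn m v).eval x := by
  simp only [eval_ofFn, mul_sum, pow_add]
  exact sum_congr rfl fun i _ => by ring

theorem stmt1_general (F : Type*) [Field F] [DecidableEq F] (n r s : ℕ)
    (α : F) (hα : α ≠ 0) (hord : ∀ m : ℕ, 0 < m → m < n → α ^ m ≠ 1)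
    (u : Fin (r + 1) → F) (hu : u ≠ 0) :
    n - r ≤ (Finset.univ.filter
      (fun j : Fin n => (∑ i : Fin (r + 1), u i * α ^ ((s + (i : ℕ)) * (j : ℕ))) ≠ 0)).card := by
  set p : F[X] := ofFn (r + 1) u
  have hp : p ≠ 0 := (map_ne_zero_iff _ (injective_ofFn _)).2 hu
  have hdeg : p.natDegree ≤ r := Nat.lt_succ_iff.1 (ofFn_natDegree_lt (by omega) u)
  have hinj : Function.Injective fun j : Fin n => α ^ (j : ℕ) := fun j k hjk =>
    Fin.ext (pow_injOn_Iio_of_pow_ne_one hα hord j.2 k.2 hjk)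
  have hcoord : ∀ j : Fin n, ∑ i : Fin (r + 1), u i * α ^ ((s + (i : ℕ)) * (j : ℕ)) =
      (α ^ (j : ℕ)) ^ s * p.eval (α ^ (j : ℕ)) := fun j => by
    simp only [pow_mul', sum_mul_pow_add_eq_pow_mul_eval_ofFn, p]
  calc n - r ≤ Fintype.card (Fin n) - p.natDegree := by rw [Fintype.card_fin]; omega
    _ ≤ #{j : Fin n | p.eval (α ^ (j : ℕ)) ≠ 0} :=
      card_sub_natDegree_le_card_filter_eval_ne_zero hp hinj
    _ = _ := by
      congr 1
      refine filter_congr fun j _ => ?_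
      rw [hcoord, mul_ne_zero_iff, and_iff_right (pow_ne_zero _ (pow_ne_zero _ hα))]

/-- If `α` is a nonzero element of a field `F` of multiplicative order at
least `n`, and `0 ≤ s ≤ s + r ≤ n - 1`, then every nonzero `F`-linear combination of the
rows `(1, α^{s+i}, α^{2(s+i)}, …, α^{(n-1)(s+i)})`, `i = 0, …, r`, has Hamming weight at
least `n - r`, i.e. the matrix `R` generates an MDS block code. -/
theorem stmt1 (F : Type*) [Field F] [DecidableEq F] (n r s : ℕ) (hn : 0 < n)
    (hrs : s + r ≤ n - 1)
    (α : F) (hα : α ≠ 0) (hord : ∀ m : ℕ, 0 < m → m < n → α ^ m ≠ 1)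
    (u : Fin (r + 1) → F) (hu : u ≠ 0) :
    n - r ≤ (Finset.univ.filter
      (fun j : Fin n => (∑ i : Fin (r + 1), u i * α ^ ((s + (i : ℕ)) * (j : ℕ))) ≠ 0)).card :=
  stmt1_general F n r s α hα hord u hu
end

section
/- If C ⊆ F_q[z]^n is a one-dimensional convolutional code of overall constraint length δ whose free distance equals the generalized Singleton bound n(δ+1) (i.e., C is an (n,1,δ) MDS convolutional code), then q ≥ δ+1. -/
/-!
Multiplying the generator by `1` and by `z - a` gives codewords of weight at least `n(δ+1)`.
For `u = 1` this forces every entry `g` of `G` to have all `δ + 1` coefficients nonzero.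
For `u = z - a` the coefficient of `z^(i+1)` in `(z - a) g` is `g_i - a g_(i+1)`, so each index
`i < δ` with `g_i / g_(i+1) = a` costs one unit of weight; hence, for every `a`, at most `n`
pairs `(j, i)` have ratio `a`. All `nδ` pairs have some nonzero ratio, so `nδ ≤ (q - 1) n`.
-/

open Polynomial Finset

theorem Finset.eq_of_le_of_card_mul_le_sum {ι : Type*} {s : Finset ι} {f : ι → ℕ} {c : ℕ}
    (hle : ∀ j ∈ s, f j ≤ c) (hsum : #s * c ≤ ∑ j ∈ s, f j) : ∀ j ∈ s, f j = c := by
  refine (sum_eq_sum_iff_of_le hle).1 (le_antisymm (sum_le_sum hle) ?_)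
  simpa using hsum

namespace Polynomial

variable {R : Type*}

theorem card_support_le_of_natDegree_le [Semiring R] {p : R[X]} {d : ℕ}
    (hdeg : p.natDegree ≤ d) : #p.support ≤ d + 1 :=
  (card_le_card (supp_subset_range (Nat.lt_succ_of_le hdeg))).trans_eq (card_range _)

theorem coeff_ne_zero_of_card_support_eq [Semiring R] {p : R[X]} {d i : ℕ}
    (hdeg : p.natDegree ≤ d) (hcard : #p.support = d + 1) (hi : i ≤ d) : p.coeff i ≠ 0 := by
  have hsub : p.support ⊆ range (d + 1) := supp_subset_range (Nat.lt_succ_of_le hdeg)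
  have hsupp : p.support = range (d + 1) :=
    eq_of_subset_of_card_le hsub (by rw [card_range, hcard])
  rw [← mem_support_iff, hsupp]
  exact mem_range.2 (Nat.lt_succ_of_le hi)

def ratioIndices [Semiring R] [DecidableEq R] (p : R[X]) (d : ℕ) (a : R) : Finset ℕ :=
  (range d).filter fun i => p.coeff i = a * p.coeff (i + 1)

theorem card_support_X_sub_C_mul_add_card_ratioIndices_le [CommRing R] [DecidableEq R]
    {p : R[X]} {d : ℕ} (hdeg : p.natDegree ≤ d) (a : R) :
    #((X - C a) * p).support + #(p.ratioIndices d a) ≤ d + 2 := by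
  have hzero : (p.ratioIndices d a).image (· + 1) ⊆ range (d + 2) := by
    intro m hm
    obtain ⟨i, hi, rfl⟩ := mem_image.1 hm
    have := mem_range.1 (mem_filter.1 hi).1
    exact mem_range.2 (by omega)
  have hsupp : ((X - C a) * p).support ⊆ range (d + 2) \ (p.ratioIndices d a).image (· + 1) := by
    intro m hm
    refine mem_sdiff.2 ⟨supp_subset_range ?_ hm, fun hm' => ?_⟩
    · have := natDegree_X_sub_C_le a
      have := natDegree_mul_le (p := X - C a) (q := p)
      omega
    · obtain ⟨i, hi, rfl⟩ := mem_image.1 hm'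
      refine mem_support_iff.1 hm ?_
      rw [sub_mul, coeff_sub, coeff_X_mul, coeff_C_mul, (mem_filter.1 hi).2, sub_self]
  have hinj : #((p.ratioIndices d a).image (· + 1)) = #(p.ratioIndices d a) :=
    card_image_of_injective _ (add_left_injective 1)
  have := card_le_card hsupp
  rw [card_sdiff_of_subset hzero, card_range, hinj] at this
  have := card_le_card hzero
  rw [card_range, hinj] at this
  omega

theorem sum_card_ratioIndices [Field R] [Fintype R] [DecidableEq R] {p : R[X]} {d : ℕ}
    (hcoeff : ∀ i ≤ d, p.coeff i ≠ 0) :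
    ∑ a ∈ univ.erase 0, #(p.ratioIndices d a) = d := by
  have hratio : ∀ i ∈ range d, p.coeff i / p.coeff (i + 1) ∈ (univ : Finset R).erase 0 := by
    intro i hi
    have := mem_range.1 hi
    exact mem_erase.2 ⟨div_ne_zero (hcoeff i (by omega)) (hcoeff (i + 1) this), mem_univ _⟩
  conv_rhs => rw [← card_range d, card_eq_sum_card_fiberwise hratio]
  refine sum_congr rfl fun a _ => congrArg card (filter_congr fun i hi => ?_)
  rw [div_eq_iff (hcoeff (i + 1) (mem_range.1 hi)), eq_comm]

end Polynomial

theorem stmt4_general (F : Type*) [Field F] [Fintype F] (n δ : ℕ) (hn : 0 < n)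
    (G : Fin n → Polynomial F)
    (hdeg : ∀ j, (G j).natDegree ≤ δ)
    (hlow : ∀ u : Polynomial F, u ≠ 0 → n * (δ + 1) ≤ ∑ j, (u * G j).support.card) :
    δ + 1 ≤ Fintype.card F := by
  classical
  have hcard : ∀ j ∈ univ, #(G j).support = δ + 1 :=
    eq_of_le_of_card_mul_le_sum (fun j _ => card_support_le_of_natDegree_le (hdeg j))
      (by simpa using hlow 1 one_ne_zero)
  have hfull : ∀ j, ∀ i ≤ δ, (G j).coeff i ≠ 0 := fun j _ hi =>
    coeff_ne_zero_of_card_support_eq (hdeg j) (hcard j (mem_univ j)) hi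
  have hratio : ∀ a, ∑ j, #((G j).ratioIndices δ a) ≤ n := by
    intro a
    have hsum := sum_le_sum fun j (_ : j ∈ univ) =>
      card_support_X_sub_C_mul_add_card_ratioIndices_le (hdeg j) a
    rw [sum_add_distrib] at hsum
    have := hlow (X - C a) (X_sub_C_ne_zero a)
    simp only [sum_const, card_univ, Fintype.card_fin, smul_eq_mul] at hsum
    linarith
  have hcount : n * δ ≤ n * (Fintype.card F - 1) :=
    calc n * δ = ∑ j : Fin n, ∑ a ∈ univ.erase 0, #((G j).ratioIndices δ a) := by
          simp [sum_card_ratioIndices (hfull _)]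
      _ = ∑ a ∈ univ.erase 0, ∑ j, #((G j).ratioIndices δ a) := sum_comm
      _ ≤ n * (Fintype.card F - 1) := by
          simpa [card_erase_of_mem, mul_comm] using
            sum_le_sum fun a (_ : a ∈ univ.erase 0) => hratio a
  have := Nat.le_of_mul_le_mul_left hcount hn
  have : 0 < Fintype.card F := Fintype.card_pos
  omega

/-- If `C = im G ⊆ F_q[z]^n` is a one-dimensional convolutional code
(`G` right-invertible) of overall constraint length `δ` (the maximal degree of the
entries of `G`) whose free distance equals the generalized Singleton bound `n(δ+1)`
— i.e. every nonzero codeword has weight `≥ n(δ+1)` and this value is attained —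
then `q ≥ δ + 1`. -/
theorem stmt4 (F : Type*) [Field F] [Fintype F] (n δ : ℕ) (hn : 0 < n)
    (G : Fin n → Polynomial F)
    (hrinv : ∃ H : Fin n → Polynomial F, ∑ j, G j * H j = 1)
    (hdeg : ∀ j, (G j).natDegree ≤ δ) (hdeg' : ∃ j, (G j).natDegree = δ)
    (hlow : ∀ u : Polynomial F, u ≠ 0 → n * (δ + 1) ≤ ∑ j, (u * G j).support.card)
    (hattain : ∃ u : Polynomial F, u ≠ 0 ∧ (∑ j, (u * G j).support.card) = n * (δ + 1)) :
    δ + 1 ≤ Fintype.card F :=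
  stmt4_general F n δ hn G hdeg hlow
end

section
/- Let F be a finite field, n ≥ 1 with ord(α) ≥ n, 0 < δ ≤ n−1, and G(z) as in the MDS construction. For every j ≥ δ+1 and every u ∈ F[z] with u_0 ≠ 0, deg u = j−δ−1, and no δ consecutive coefficients of u all zero, the codeword uG has weight at least (n−δ)j + δ(δ+1). Hence the j-th extended row distance of C = im G satisfies d̂^r_j ≥ (n−δ)j + δ(δ+1). -/
/-
The `k`-th coefficient of the `t`-th component `u(z) · Σ_{ν ≤ δ} (α^t z)^ν` is the value at
`α^t` of the window polynomial `W_k(x) = Σ_{ν ≤ min(k, δ)} u_{k-ν} x^ν`. The gap condition makes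
every `W_k` (for `k < deg u + δ + 1`) nonzero, and `x^(k - deg u)` divides it, so it vanishes at
no more than `min(k, δ) - (k - deg u)` of the `n` distinct nonzero points `α^t`. Summing the
resulting lower bound `n - min(k, δ) + (k - deg u)` over the `j = deg u + δ + 1` coefficients
gives `(n - δ) j + δ(δ + 1)`.
-/

open Polynomial Finset

namespace Polynomial

theorem card_filter_eval_eq_zero_le_s5 {R ι : Type*} [CommRing R] [IsDomain R] [DecidableEq R]
    [Fintype ι] {P : R[X]} (hP : P ≠ 0) {β : ι → R} (hβ : Function.Injective β)
    (hβ0 : ∀ i, β i ≠ 0) :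
    #{i | P.eval (β i) = 0} ≤ P.natDegree - P.natTrailingDegree := by
  have hsplit := congrArg Multiset.card (Multiset.filter_add_not (0 = ·) P.roots)
  rw [Multiset.card_add, ← Multiset.count_eq_card_filter_eq, count_roots,
    rootMultiplicity_eq_natTrailingDegree'] at hsplit
  simp only [← ne_eq] at hsplit
  calc #{i | P.eval (β i) = 0}
      ≤ (P.roots.filter (0 ≠ ·)).toFinset.card :=
        card_le_card_of_injOn β (fun i hi => by simp_all [(hβ0 i).symm]) hβ.injOn
    _ ≤ Multiset.card (P.roots.filter (0 ≠ ·)) := Multiset.toFinset_card_le _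
    _ ≤ P.natDegree - P.natTrailingDegree := by
        have := card_roots' P
        omega

section windowPoly

variable {R : Type*} [CommSemiring R]

noncomputable def windowPoly (u : R[X]) (d k : ℕ) : R[X] :=
  ∑ ν ∈ range (min k d + 1), C (u.coeff (k - ν)) * X ^ ν

variable (u : R[X]) (d k : ℕ)

theorem coeff_windowPoly (ν : ℕ) :
    (windowPoly u d k).coeff ν = if ν ≤ min k d then u.coeff (k - ν) else 0 := by
  simp only [windowPoly, finsetSum_coeff, coeff_C_mul_X_pow, sum_ite_eq, mem_range,
    Nat.lt_succ_iff]

theorem natDegree_windowPoly_le : (windowPoly u d k).natDegree ≤ min k d :=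
  natDegree_sum_le_of_forall_le _ _ fun _ hν =>
    (natDegree_C_mul_X_pow_le _ _).trans (Nat.lt_succ_iff.mp (mem_range.mp hν))

theorem sub_natDegree_le_natTrailingDegree_windowPoly (h : windowPoly u d k ≠ 0) :
    k - u.natDegree ≤ (windowPoly u d k).natTrailingDegree :=
  le_natTrailingDegree h fun ν hν => by
    rw [coeff_windowPoly]
    split_ifs
    · exact coeff_eq_zero_of_natDegree_lt (by omega)
    · rfl

theorem coeff_mul_geom_sum (β : R) :
    (u * ∑ ν ∈ range (d + 1), C (β ^ ν) * X ^ ν).coeff k = (windowPoly u d k).eval β := by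
  have hterm (ν : ℕ) : (u * (C (β ^ ν) * X ^ ν)).coeff k =
      if ν ≤ k then u.coeff (k - ν) * β ^ ν else 0 := by
    rw [← mul_assoc, coeff_mul_X_pow', coeff_mul_C]
  have hrange : {ν ∈ range (d + 1) | ν ≤ k} = range (min k d + 1) := by
    ext ν
    simp only [mem_filter, mem_range]
    omega
  simp only [windowPoly, mul_sum, finsetSum_coeff, hterm, ← sum_filter, hrange,
    eval_finsetSum, eval_C_mul, eval_X_pow]

variable {u d k}

theorem windowPoly_ne_zero {i : ℕ} (hik : i ≤ k) (hki : k ≤ i + d) (hu : u.coeff i ≠ 0) :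
    windowPoly u d k ≠ 0 := by
  intro h
  have := coeff_windowPoly u d k (k - i)
  rw [h, coeff_zero, if_pos (by omega), Nat.sub_sub_self hik] at this
  exact hu this.symm

theorem exists_coeff_ne_zero_window (hu0 : u.coeff 0 ≠ 0)
    (hgap : ∀ i, i + d ≤ u.natDegree + 1 → ∃ l < d, u.coeff (i + l) ≠ 0)
    (hk : k < u.natDegree + d + 1) : ∃ i ≤ k, k ≤ i + d ∧ u.coeff i ≠ 0 := by
  rcases le_or_gt k d with hkd | hdk
  · exact ⟨0, k.zero_le, by omega, hu0⟩
  rcases le_or_gt u.natDegree k with hDk | hkD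
  · have hu : u ≠ 0 := by
      rintro rfl
      exact hu0 (coeff_zero 0)
    exact ⟨u.natDegree, hDk, by omega, mt leadingCoeff_eq_zero.mp hu⟩
  · obtain ⟨l, hl, hul⟩ := hgap (k - d) (by omega)
    exact ⟨k - d + l, by omega, by omega, hul⟩

end windowPoly

theorem le_card_coeff_mul_geom_sum_ne_zero {R ι : Type*} [CommRing R] [IsDomain R]
    [DecidableEq R] [Fintype ι] {u : R[X]} {d k i : ℕ} {β : ι → R}
    (hβ : Function.Injective β) (hβ0 : ∀ t, β t ≠ 0) (hik : i ≤ k) (hki : k ≤ i + d)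
    (hu : u.coeff i ≠ 0) :
    Fintype.card ι - (min k d - (k - u.natDegree)) ≤
      #{t | (u * ∑ ν ∈ range (d + 1), C (β t ^ ν) * X ^ ν).coeff k ≠ 0} := by
  have hW := windowPoly_ne_zero hik hki hu
  have hzero := card_filter_eval_eq_zero_le_s5 hW hβ hβ0
  have hdeg := natDegree_windowPoly_le u d k
  have htrail := sub_natDegree_le_natTrailingDegree_windowPoly u d k hW
  have hsplit := card_filter_add_card_filter_not (s := univ)
    (p := fun t => (windowPoly u d k).eval (β t) = 0)
  rw [card_univ] at hsplit
  simp only [coeff_mul_geom_sum, ← ne_eq] at hsplit ⊢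
  omega

end Polynomial

theorem Nat.sum_range_tsub_add_tsub (D d : ℕ) :
    ∑ k ∈ range (D + d + 1), ((d - k) + (k - D)) = d * (d + 1) := by
  have h1 : ∑ k ∈ range (D + d + 1), (d - k) = ∑ k ∈ range (d + 1), k := by
    rw [show D + d + 1 = d + 1 + D by omega, sum_range_add, ← sum_range_reflect (fun k => k)]
    simp only [add_tsub_cancel_right, add_eq_left]
    exact sum_eq_zero fun i _ => by omega
  have h2 : ∑ k ∈ range (D + d + 1), (k - D) = ∑ k ∈ range (d + 1), k := by
    rw [add_assoc, sum_range_add]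
    simp only [add_tsub_cancel_left, add_eq_right]
    exact sum_eq_zero fun i hi => by simp at hi; omega
  rw [sum_add_distrib, h1, h2, ← two_mul, mul_comm, sum_range_id_mul_two, Nat.add_sub_cancel,
    mul_comm]

theorem stmt5_general (F : Type*) [Field F] (n δ : ℕ)
    (hδ : δ ≤ n - 1)
    (α : F) (hord : n ≤ orderOf α)
    (j : ℕ) (hj : δ + 1 ≤ j)
    (u : Polynomial F) (hu0 : u.coeff 0 ≠ 0) (hudeg : u.natDegree = j - δ - 1)
    (hgap : ∀ i : ℕ, i + δ ≤ u.natDegree + 1 → ∃ l < δ, u.coeff (i + l) ≠ 0) :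
    (n - δ) * j + δ * (δ + 1) ≤ ∑ t : Fin n,
      (u * ∑ ν ∈ Finset.range (δ + 1),
        Polynomial.C (α ^ ((t : ℕ) * ν)) * Polynomial.X ^ ν).support.card := by
  classical
  have hβ : Function.Injective fun t : Fin n => α ^ (t : ℕ) := fun s t hst =>
    Fin.ext (pow_injOn_Iio_orderOf (lt_of_lt_of_le s.isLt hord) (lt_of_lt_of_le t.isLt hord) hst)
  have hβ0 (t : Fin n) : α ^ (t : ℕ) ≠ 0 := by
    refine pow_ne_zero _ ?_
    rintro rfl
    rw [orderOf_zero] at hord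
    exact absurd t.isLt (by omega)
  have hj' : j = u.natDegree + δ + 1 := by omega
  simp_rw [pow_mul]
  calc (n - δ) * j + δ * (δ + 1)
      = ∑ k ∈ range j, ((n - δ) + ((δ - k) + (k - u.natDegree))) := by
        rw [sum_add_distrib, sum_const, card_range, smul_eq_mul, hj',
          Nat.sum_range_tsub_add_tsub]
        ring
    _ = ∑ k ∈ range j, (n - (min k δ - (k - u.natDegree))) :=
        sum_congr rfl fun k hk => by simp only [mem_range] at hk; omega
    _ ≤ ∑ k ∈ range j, #{t : Fin n | (u * ∑ ν ∈ range (δ + 1),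
          C ((α ^ (t : ℕ)) ^ ν) * X ^ ν).coeff k ≠ 0} := sum_le_sum fun k hk => by
        obtain ⟨i, hik, hki, hu⟩ :=
          exists_coeff_ne_zero_window (k := k) hu0 hgap (by simp only [mem_range] at hk; omega)
        simpa only [Fintype.card_fin] using le_card_coeff_mul_geom_sum_ne_zero hβ hβ0 hik hki hu
    _ = ∑ t : Fin n, #{k ∈ range j | (u * ∑ ν ∈ range (δ + 1),
          C ((α ^ (t : ℕ)) ^ ν) * X ^ ν).coeff k ≠ 0} :=
        sum_card_bipartiteAbove_eq_sum_card_bipartiteBelow _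
    _ ≤ _ := sum_le_sum fun t _ =>
        card_le_card fun k hk => mem_support_iff.mpr (mem_filter.mp hk).2

/-- extended row distances of the MDS construction.  Let `F` be a finite
field, `α ∈ F` with `ord(α) ≥ n`, `0 < δ ≤ n - 1`, and `G(z)` with `j`-th entry
`Σ_{ν=0}^{δ} (α^j z)^ν`.  For every `j ≥ δ + 1` and every `u ∈ F[z]` with `u_0 ≠ 0`,
`deg u = j - δ - 1`, and no `δ` consecutive coefficients of `u` all zero, the codeword
`uG` has weight at least `(n - δ)j + δ(δ+1)`; hence the `j`-th extended row distance
satisfies `d̂^r_j ≥ (n - δ)j + δ(δ+1)`. -/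
theorem stmt5 (F : Type*) [Field F] [Fintype F] (n δ : ℕ) (hn : 0 < n)
    (hδ0 : 0 < δ) (hδ : δ ≤ n - 1)
    (α : F) (hord : n ≤ orderOf α)
    (j : ℕ) (hj : δ + 1 ≤ j)
    (u : Polynomial F) (hu0 : u.coeff 0 ≠ 0) (hudeg : u.natDegree = j - δ - 1)
    (hgap : ∀ i : ℕ, i + δ ≤ u.natDegree + 1 → ∃ l < δ, u.coeff (i + l) ≠ 0) :
    (n - δ) * j + δ * (δ + 1) ≤ ∑ t : Fin n,
      (u * ∑ ν ∈ Finset.range (δ + 1),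
        Polynomial.C (α ^ ((t : ℕ) * ν)) * Polynomial.X ^ ν).support.card :=
  stmt5_general F n δ hδ α hord j hj u hu0 hudeg hgap
end

section
/- Let F be a field, α ∈ F with ord(α) = n, and define the (n−1)×n matrix H over F[z] with entries H_{j,ν} = (z − α^{n−ν+1})^j for j = 1,…,n−1 and ν = 1,…,n (columns indexed so the ν-th column uses the linear factor z − α^{n−ν+1}). Then G·H^T = 0, where G = Σ_{ν=0}^{n−1} z^ν (1, α^ν, …, α^{(n−1)ν}). -/
/-!
For the column `ν = k + 1` put `b = α ^ k` and `c = α⁻¹ ^ k`. Since `c * b = 1` and `b ^ n = 1`,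
the geometric sum `G_ν(z) = ∑ (b z) ^ μ` satisfies `G_ν(z) * (z - c) = c * (z ^ n - 1)`, so the
`j`-th entry of `G Hᵀ` is `(z ^ n - 1) * ∑ₖ c (z - c) ^ (j - 1)`. Expanded binomially, the
coefficients of the last sum are the power sums `∑ₖ (α⁻¹ ^ k) ^ m` with `1 ≤ m ≤ j < n`, which
vanish because `α⁻¹` is a primitive `n`-th root of unity.
-/

open Polynomial Finset

theorem sum_range_pow_pow_eq_zero {R : Type*} [CommRing R] [IsDomain R] {ζ : R} {n m : ℕ}
    (hn : ζ ^ n = 1) (hm : ζ ^ m ≠ 1) : ∑ k ∈ range n, (ζ ^ k) ^ m = 0 := by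
  have hgeom : (∑ k ∈ range n, (ζ ^ m) ^ k) * (ζ ^ m - 1) = 0 := by
    rw [geom_sum_mul, ← pow_mul, mul_comm, pow_mul, hn, one_pow, sub_self]
  simp_rw [← pow_mul, mul_comm _ m, pow_mul]
  exact (mul_eq_zero.mp hgeom).resolve_right (sub_ne_zero.mpr hm)

theorem sum_mul_sub_pow_eq_zero {A ι : Type*} [CommRing A] (s : Finset ι) (c : ι → A) (x : A)
    (i : ℕ) (hc : ∀ m, 1 ≤ m → m ≤ i + 1 → ∑ k ∈ s, c k ^ m = 0) :
    ∑ k ∈ s, c k * (x - c k) ^ i = 0 := by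
  have hexpand : ∀ k, c k * (x - c k) ^ i = ∑ m ∈ range (i + 1),
      (-1) ^ (m + i) * x ^ m * (i.choose m : A) * c k ^ (i - m + 1) := by
    intro k
    rw [sub_pow, mul_sum]
    refine sum_congr rfl fun m _ => ?_
    ring
  rw [sum_congr rfl fun k _ => hexpand k, sum_comm]
  refine sum_eq_zero fun m hm => ?_
  rw [← mul_sum, hc _ le_add_self (by grind), mul_zero]

theorem geom_sum_mul_sub_eq {A : Type*} [CommRing A] {b c : A} {n : ℕ} (hcb : c * b = 1)
    (hb : b ^ n = 1) (x : A) :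
    (∑ μ ∈ range n, b ^ μ * x ^ μ) * (x - c) = c * (x ^ n - 1) := by
  have hfactor : x - c = c * (b * x - 1) := by linear_combination (-x) * hcb
  simp_rw [← mul_pow]
  rw [hfactor, mul_left_comm, geom_sum_mul, mul_pow, hb, one_mul]

theorem sum_Icc_one_eq_sum_range {M : Type*} [AddCommMonoid M] (f : ℕ → M) (n : ℕ) :
    ∑ ν ∈ Icc 1 n, f ν = ∑ k ∈ range n, f (k + 1) := by
  rw [← Finset.Ico_add_one_right_eq_Icc, sum_Ico_eq_sum_range, Nat.add_sub_cancel]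
  simp_rw [add_comm 1]

theorem geom_sum_C_mul_X_pow_mul_X_sub_C_pow {F : Type*} [Field F] {ζ : F} {n k : ℕ}
    (hζ : ζ ^ n = 1) (hζ0 : ζ ≠ 0) (hk : k ≤ n) (i : ℕ) :
    (∑ μ ∈ range n, C (ζ ^ (k * μ)) * X ^ μ) * (X - C (ζ ^ (n - k))) ^ (i + 1)
      = (X ^ n - 1) * (C (ζ⁻¹ ^ k) * (X - C (ζ⁻¹ ^ k)) ^ i) := by
  have hc : ζ ^ (n - k) = ζ⁻¹ ^ k := by rw [pow_sub₀ ζ hζ0 hk, hζ, one_mul, inv_pow]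
  have hcb : C (ζ⁻¹ ^ k) * C (ζ ^ k) = 1 := by
    rw [← C_mul, inv_pow, inv_mul_cancel₀ (pow_ne_zero _ hζ0), C_1]
  have hb : C (ζ ^ k) ^ n = 1 := by rw [← C_pow, ← pow_mul, mul_comm, pow_mul, hζ, one_pow, C_1]
  have hG : ∑ μ ∈ range n, C (ζ ^ (k * μ)) * X ^ μ = ∑ μ ∈ range n, C (ζ ^ k) ^ μ * X ^ μ := by
    simp_rw [pow_mul, C_pow]
  rw [hc, hG, pow_succ', ← mul_assoc, geom_sum_mul_sub_eq hcb hb]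
  ring

/-- Let `α ∈ F` have multiplicative order exactly `n`, and let
`H ∈ F[z]^{(n-1)×n}` be the Vandermonde-type matrix with `(j,ν)` entry
`(z - α^{n-ν+1})^j` (`j = 1, …, n-1`, `ν = 1, …, n`).  Then `G · Hᵀ = 0` for
`G = Σ_{ν=0}^{n-1} z^ν (1, α^ν, …, α^{(n-1)ν})`, i.e. for every `j = 1, …, n-1`,
`Σ_{ν=1}^{n} G_ν(z) · (z - α^{n-ν+1})^j = 0`. -/
theorem stmt9 (F : Type*) [Field F] (n : ℕ) (α : F) (hord : orderOf α = n)
    (j : ℕ) (hj1 : 1 ≤ j) (hj2 : j ≤ n - 1) :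
    ∑ ν ∈ Finset.Icc 1 n,
      (∑ μ ∈ Finset.range n, Polynomial.C (α ^ ((ν - 1) * μ)) * Polynomial.X ^ μ) *
        (Polynomial.X - Polynomial.C (α ^ (n - ν + 1))) ^ j = 0 := by
  obtain ⟨i, rfl⟩ : ∃ i, j = i + 1 := ⟨j - 1, by omega⟩
  have hα : IsPrimitiveRoot α n := hord ▸ IsPrimitiveRoot.orderOf α
  have hterm : ∀ k ∈ range n,
      (∑ μ ∈ range n, C (α ^ ((k + 1 - 1) * μ)) * X ^ μ) * (X - C (α ^ (n - (k + 1) + 1))) ^ (i + 1)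
        = (X ^ n - 1) * (C (α⁻¹ ^ k) * (X - C (α⁻¹ ^ k)) ^ i) := fun k hk => by
    rw [Nat.add_sub_cancel, show n - (k + 1) + 1 = n - k by grind]
    exact geom_sum_C_mul_X_pow_mul_X_sub_C_pow hα.pow_eq_one (hα.ne_zero (by omega))
      (mem_range.mp hk).le i
  rw [sum_Icc_one_eq_sum_range, sum_congr rfl hterm, ← mul_sum, sum_mul_sub_pow_eq_zero, mul_zero]
  intro m hm1 hm2
  have hm : α⁻¹ ^ m ≠ 1 := hα.inv.pow_ne_one_of_pos_of_lt (by omega) (by omega)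
  simp_rw [← C_pow, ← map_sum, sum_range_pow_pow_eq_zero hα.inv.pow_eq_one hm, map_zero]
end

section
/- Let F be a field, α ∈ F with ord(α) = n, and H ∈ F[z]^{(n−1)×n} the matrix with (j,ν) entry (z − α^{n−ν+1})^j. For each j = 1,…,n, the determinant of the (n−1)×(n−1) submatrix H^{(j)} of H obtained by deleting the j-th column equals c_j · Π_{ν≠n−j+1, 1≤ν≤n} (z − α^ν) for some nonzero constant c_j ∈ F. -/
/-!
Pulling the factor `X - a_k` out of column `k` turns the matrix `((X - a_k)^(i+1))_{i,k}` into
the transposed Vandermonde matrix of the polynomials `X - a_k`. Its determinant is a product of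
differences `(X - a_l) - (X - a_k) = a_k - a_l`, a constant, and this constant is nonzero as soon
as the `a_k` are distinct. For `H^{(j)}` the `a_k` are the powers `α^(n-ν)`, `ν ≠ j`, which are
distinct because `α` has order `n`.
-/

open Polynomial Finset Function

lemma pow_injOn_Ioc_orderOf {G : Type*} [Monoid G] (x : G) :
    (Set.Ioc 0 (orderOf x)).InjOn (x ^ ·) := by
  rintro a ⟨ha₀, ha⟩ b ⟨hb₀, hb⟩ h
  have hx : IsOfFinOrder x := orderOf_pos_iff.mp (by omega)
  exact Nat.ModEq.eq_of_abs_lt (hx.pow_inj_mod.mp h) (abs_sub_lt_iff.mpr ⟨by omega, by omega⟩)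

lemma Fin.prod_sub_succAbove_eq_prod_erase {M : Type*} [CommMonoid M] {m : ℕ} (f : ℕ → M)
    (j : Fin (m + 1)) :
    ∏ k : Fin m, f (m + 1 - j.succAbove k) =
      ∏ ν ∈ (Icc 1 (m + 1)).erase (m + 1 - j), f ν := by
  set g : Fin (m + 1) → ℕ := fun ν => m + 1 - ν
  have hg : Injective g := fun ν ν' h => Fin.ext (by simp only [g] at h; omega)
  have hg_image : univ.image g = Icc 1 (m + 1) := by
    ext ν
    simp only [mem_image, mem_univ, true_and, mem_Icc, g]
    exact ⟨by omega, fun hν => ⟨⟨m + 1 - ν, by omega⟩, by simp only; omega⟩⟩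
  calc ∏ k : Fin m, f (g (j.succAbove k))
      = ∏ ν ∈ univ.image j.succAbove, f (g ν) := by
        rw [prod_image fun _ _ _ _ h => j.succAbove_right_injective h]
    _ = ∏ ν ∈ (univ.erase j).image g, f ν := by
        rw [Fin.image_succAbove_univ, compl_singleton, prod_image hg.injOn]
    _ = _ := by rw [image_erase hg, hg_image]

lemma Matrix.det_of_pow_succ {R : Type*} [CommRing R] {m : ℕ} (v : Fin m → R) :
    (Matrix.of fun i k : Fin m => v k ^ ((i : ℕ) + 1)).det
      = (∏ k, v k) * (Matrix.vandermonde v).det := by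
  rw [← Matrix.det_transpose (Matrix.vandermonde v), ← Matrix.det_mul_row]
  congr 1
  ext i k
  simp [pow_succ, mul_comm]

lemma Matrix.det_vandermonde_X_sub_C {R : Type*} [CommRing R] {m : ℕ} (a : Fin m → R) :
    (Matrix.vandermonde fun k => X - C (a k)).det = C (Matrix.vandermonde (-a)).det := by
  simp only [Matrix.det_vandermonde, map_prod]
  refine prod_congr rfl fun i _ => prod_congr rfl fun k _ => ?_
  simp only [Pi.neg_apply, map_sub, map_neg]
  ring

theorem exists_det_X_sub_C_pow_succ {R : Type*} [CommRing R] [IsDomain R] {m : ℕ}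
    {a : Fin m → R} (ha : Injective a) :
    ∃ c : R, c ≠ 0 ∧ (Matrix.of fun i k : Fin m => (X - C (a k)) ^ ((i : ℕ) + 1)).det
      = C c * ∏ k, (X - C (a k)) :=
  ⟨(Matrix.vandermonde (-a)).det, Matrix.det_vandermonde_ne_zero_iff.mpr (neg_injective.comp ha),
    by rw [Matrix.det_of_pow_succ, Matrix.det_vandermonde_X_sub_C, mul_comm]⟩

-- Paper row `i + 1`, column `ν + 1` (with factor `z - α^{n-ν}`), deleted column `j + 1`.
/-- Let `α ∈ F` have multiplicative order exactly `n = m + 1`, and let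
`H ∈ F[z]^{(n-1)×n}` have `(j,ν)` entry `(z - α^{n-ν+1})^j` (rows `j = 1,…,n-1`
indexed here by `i : Fin m` via `j = i+1`, columns `ν = 1,…,n` indexed by `ν₀ : Fin (m+1)`
via `ν = ν₀+1`, so the factor is `z - α^{n-ν₀}`).  For each deleted column `j : Fin n`
(paper index `j+1`), the determinant of the remaining `(n-1)×(n-1)` submatrix equals
`c · Π_{ν ∈ {1,…,n} \ {n-j}} (z - α^ν)` for some nonzero constant `c ∈ F`. -/
theorem stmt10 (F : Type*) [Field F] (m : ℕ) (α : F) (hord : orderOf α = m + 1)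
    (j : Fin (m + 1)) :
    ∃ c : F, c ≠ 0 ∧
      Matrix.det ((Matrix.of fun (i : Fin m) (ν : Fin (m + 1)) =>
          (Polynomial.X - Polynomial.C (α ^ (m + 1 - (ν : ℕ)))) ^ ((i : ℕ) + 1)).submatrix
          id j.succAbove)
        = Polynomial.C c *
          ∏ ν ∈ (Finset.Icc 1 (m + 1)).erase (m + 1 - (j : ℕ)),
            (Polynomial.X - Polynomial.C (α ^ ν)) := by
  have hpoints : Injective fun ν : Fin (m + 1) => α ^ (m + 1 - (ν : ℕ)) := by
    intro ν ν' h
    have hmem (μ : Fin (m + 1)) : m + 1 - (μ : ℕ) ∈ Set.Ioc 0 (orderOf α) := by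
      rw [hord]
      exact ⟨by omega, by omega⟩
    exact Fin.ext (by have := pow_injOn_Ioc_orderOf α (hmem ν) (hmem ν') h; omega)
  obtain ⟨c, hc, hdet⟩ := exists_det_X_sub_C_pow_succ (hpoints.comp j.succAbove_right_injective)
  refine ⟨c, hc, hdet.trans (congrArg (C c * ·) ?_)⟩
  exact Fin.prod_sub_succAbove_eq_prod_erase (fun ν => X - C (α ^ ν)) j
end

section
/- Let F be a field, α ∈ F with ord(α) = n, and define H_min ∈ F[z]^{(n−1)×n} with (j,ν) entry (α^{n−ν+1})^{j−1} z − (α^{n−ν+1})^j, for j = 1,…,n−1, ν = 1,…,n. Then G·H_min^T = 0 where G = Σ_{ν=0}^{n−1} z^ν (1, α^ν, …, α^{(n−1)ν}). -/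
/-!
With `a = α^(ν-1)` and `β = α^(n-ν+1) = a⁻¹`, the `ν`-th term is
`β^j (aX - 1) · Σ_μ (aX)^μ = β^j (X^n - 1)`, because `a^n = 1`. Summing over `ν` leaves
`(X^n - 1) · Σ_ν β^j`, a geometric sum in the `n`-th root of unity `α^(-j) ≠ 1`, which vanishes.
-/

open Polynomial Finset

theorem geom_sum_eq_zero_of_pow_eq_one {R : Type*} [CommRing R] [IsDomain R] {x : R} {n : ℕ}
    (hx : x ≠ 1) (hxn : x ^ n = 1) : ∑ i ∈ range n, x ^ i = 0 := by
  have h := geom_sum_mul x n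
  rw [hxn, sub_self] at h
  exact (mul_eq_zero.mp h).resolve_right (sub_ne_zero.mpr hx)

theorem sum_Icc_one_comp_sub_one {M : Type*} [AddCommMonoid M] (f : ℕ → M) (n : ℕ) :
    ∑ ν ∈ Icc 1 n, f (ν - 1) = ∑ i ∈ range n, f i := by
  rw [← Ico_add_one_right_eq_Icc, sum_Ico_eq_sum_range]
  simp

theorem Polynomial.geom_sum_C_mul_X_mul_sub {R : Type*} [CommRing R] {a b : R} {n : ℕ}
    (hab : a * b = 1) (han : a ^ n = 1) (k : ℕ) :
    (∑ μ ∈ range n, C (a ^ μ) * X ^ μ) * (C (b ^ k) * X - C (b ^ (k + 1))) =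
      C (b ^ (k + 1)) * (X ^ n - 1) := by
  have hlin : C (b ^ k) * X - C (b ^ (k + 1)) = C (b ^ (k + 1)) * (C a * X - 1) := by
    rw [mul_sub, ← mul_assoc, ← C_mul, pow_succ, mul_assoc, mul_comm b, hab, mul_one, mul_one]
  have hgeom : ∑ μ ∈ range n, C (a ^ μ) * X ^ μ = ∑ μ ∈ range n, (C a * X) ^ μ := by
    simp only [mul_pow, C_pow]
  rw [hlin, hgeom, mul_left_comm, geom_sum_mul, mul_pow, ← C_pow, han, C_1, one_mul]

/-- Let `α ∈ F` have multiplicative order exactly `n`, and let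
`H_min ∈ F[z]^{(n-1)×n}` have `(j,ν)` entry `(α^{n-ν+1})^{j-1} z - (α^{n-ν+1})^j`
(`j = 1,…,n-1`, `ν = 1,…,n`).  Then `G · H_minᵀ = 0` for
`G = Σ_{ν=0}^{n-1} z^ν (1, α^ν, …, α^{(n-1)ν})`, i.e. for every `j = 1, …, n-1`,
`Σ_{ν=1}^{n} G_ν(z) · ((α^{n-ν+1})^{j-1} z - (α^{n-ν+1})^j) = 0`. -/
theorem stmt11 (F : Type*) [Field F] (n : ℕ) (α : F) (hord : orderOf α = n)
    (j : ℕ) (hj1 : 1 ≤ j) (hj2 : j ≤ n - 1) :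
    ∑ ν ∈ Finset.Icc 1 n,
      (∑ μ ∈ Finset.range n, Polynomial.C (α ^ ((ν - 1) * μ)) * Polynomial.X ^ μ) *
        (Polynomial.C ((α ^ (n - ν + 1)) ^ (j - 1)) * Polynomial.X
          - Polynomial.C ((α ^ (n - ν + 1)) ^ j)) = 0 := by
  obtain ⟨k, rfl⟩ : ∃ k, j = k + 1 := ⟨j - 1, by omega⟩
  have hαn : α ^ n = 1 := hord ▸ pow_orderOf_eq_one α
  have hαj : α ^ (k + 1) ≠ 1 := pow_ne_one_of_lt_orderOf (by omega) (by omega)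
  have hmul : ∀ ν ∈ Icc 1 n, α ^ (ν - 1) * α ^ (n - ν + 1) = 1 := fun ν hν => by
    rw [← pow_add, show ν - 1 + (n - ν + 1) = n by grind, hαn]
  have hterm : ∀ ν ∈ Icc 1 n,
      (∑ μ ∈ range n, C (α ^ ((ν - 1) * μ)) * X ^ μ) *
        (C ((α ^ (n - ν + 1)) ^ (k + 1 - 1)) * X - C ((α ^ (n - ν + 1)) ^ (k + 1)))
        = C ((α ^ (n - ν + 1)) ^ (k + 1)) * (X ^ n - 1) := fun ν hν => by
    simp only [pow_mul, Nat.add_sub_cancel]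
    exact geom_sum_C_mul_X_mul_sub (hmul ν hν) (by rw [pow_right_comm, hαn, one_pow]) k
  have hsum : ∑ ν ∈ Icc 1 n, (α ^ (n - ν + 1)) ^ (k + 1) = 0 := by
    have hinv : ∀ ν ∈ Icc 1 n, (α ^ (n - ν + 1)) ^ (k + 1) = ((α ^ (k + 1))⁻¹) ^ (ν - 1) :=
      fun ν hν => by
        rw [eq_inv_of_mul_eq_one_right (hmul ν hν), inv_pow, inv_pow, pow_right_comm]
    rw [sum_congr rfl hinv, sum_Icc_one_comp_sub_one (fun i => ((α ^ (k + 1))⁻¹) ^ i)]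
    exact geom_sum_eq_zero_of_pow_eq_one (inv_ne_one.mpr hαj)
      (by rw [inv_pow, pow_right_comm, hαn, one_pow, inv_one])
  rw [sum_congr rfl hterm, ← sum_mul, ← map_sum, hsum, C_0, zero_mul]
end

section
/- Let F be a field, n coprime to char F, α ∈ F with ord(α) = n, A = F[x]/(x^n−1), ε_k the primitive idempotents, and σ(x) = αx. In the skew ring A[z;σ], the element g = Σ_{ν=0}^{δ} z^ν Σ_{i=0}^{n−1} α^{νi} x^i satisfies g = n·ε_0·Σ_{ν=0}^{δ} z^ν = n Σ_{ν=0}^{δ} z^ν ε_{(n−ν) mod n}. -/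
open Polynomial

/-!
Every polynomial involved has degree `< n`, so it is determined by its values at the `n`
distinct points `α ^ j`. At `α ^ j` the sum `Σ_i (α ^ ν x) ^ i` is a geometric sum in
`α ^ (ν + j)`, equal to `n` if `n ∣ ν + j` and to `0` otherwise, while `ε_k` is the indicator
of `j = k`; this identifies `g_ν` with `n ε_{(n - ν) mod n}`. Since `σ` acts on classes by
substituting `α x` for `x`, `g_ν` is also `σ^ν (g_0) = n σ^ν (ε_0)`.
-/

theorem IsPrimitiveRoot.geom_sum_pow_eq_ite {K : Type*} [Field K] {ζ : K} {n : ℕ}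
    (h : IsPrimitiveRoot ζ n) (m : ℕ) :
    ∑ i ∈ Finset.range n, (ζ ^ m) ^ i = if n ∣ m then (n : K) else 0 := by
  split_ifs with hdvd
  · simp [(h.pow_eq_one_iff_dvd m).2 hdvd]
  · rw [geom_sum_eq (mt (h.pow_eq_one_iff_dvd m).1 hdvd), ← pow_mul, mul_comm, pow_mul,
      h.pow_eq_one, one_pow, sub_self, zero_div]

theorem IsPrimitiveRoot.eq_of_degree_lt_of_eval_pow_eq {K : Type*} [Field K] {ζ : K} {n : ℕ}
    (h : IsPrimitiveRoot ζ n) {p q : K[X]} (hp : p.degree < n) (hq : q.degree < n)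
    (heval : ∀ j < n, p.eval (ζ ^ j) = q.eval (ζ ^ j)) : p = q :=
  Polynomial.eq_of_degrees_lt_of_eval_index_eq (Finset.range n)
    (fun _ hi _ hj hij => h.pow_inj (Finset.mem_range.1 hi) (Finset.mem_range.1 hj) hij)
    (by rwa [Finset.card_range]) (by rwa [Finset.card_range])
    (fun j hj => heval j (Finset.mem_range.1 hj))

theorem Nat.dvd_add_iff_eq_sub_mod_mod {n m j : ℕ} (hj : j < n) :
    n ∣ m + j ↔ j = (n - m % n) % n := by
  rw [← ZMod.natCast_eq_zero_iff, ← Nat.mod_eq_of_lt hj, ← Nat.mod_mod (n - m % n),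
    ← ZMod.natCast_eq_natCast_iff', Nat.mod_eq_of_lt hj, ZMod.natCast_mod,
    Nat.cast_sub (Nat.mod_lt m (by omega)).le, ZMod.natCast_self, ZMod.natCast_mod, zero_sub,
    eq_neg_iff_add_eq_zero, add_comm, Nat.cast_add]

theorem Polynomial.degree_sum_range_C_mul_X_pow_lt {R : Type*} [CommRing R] (a : R) (n : ℕ) :
    (∑ i ∈ Finset.range n, (C a * X) ^ i).degree < (n : WithBot ℕ) := by
  rw [← mem_degreeLT]
  refine Submodule.sum_mem _ fun i hi => mem_degreeLT.2 ?_
  rw [mul_pow, ← C_pow]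
  exact (degree_C_mul_X_pow_le i _).trans_lt (WithBot.coe_lt_coe.2 (Finset.mem_range.1 hi))

theorem Ideal.Quotient.algHom_mk_eq_mk_comp {R G : Type*} [CommRing R] {I : Ideal R[X]}
    [FunLike G (R[X] ⧸ I) (R[X] ⧸ I)] [AlgHomClass G R (R[X] ⧸ I) (R[X] ⧸ I)] (φ : G)
    {q : R[X]} (hφ : φ (Ideal.Quotient.mk I X) = Ideal.Quotient.mk I q) (p : R[X]) :
    φ (Ideal.Quotient.mk I p) = Ideal.Quotient.mk I (p.comp q) := by
  have : (AlgHomClass.toAlgHom φ).comp (Ideal.Quotient.mkₐ R I) =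
      (Ideal.Quotient.mkₐ R I).comp (aeval q) :=
    Polynomial.algHom_ext (by simpa using hφ)
  simpa [comp_eq_aeval] using DFunLike.congr_fun this p

theorem AlgEquiv.pow_apply_mk_X_of_apply_mk_X {R : Type*} [CommRing R] {I : Ideal R[X]}
    (σ : (R[X] ⧸ I) ≃ₐ[R] (R[X] ⧸ I)) {a : R}
    (hσ : σ (Ideal.Quotient.mk I X) = Ideal.Quotient.mk I (C a * X)) (m : ℕ) :
    (σ ^ m) (Ideal.Quotient.mk I X) = Ideal.Quotient.mk I (C (a ^ m) * X) := by
  induction m with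
  | zero => simp
  | succ m ih =>
    rw [pow_succ', AlgEquiv.mul_apply, ih,
      Ideal.Quotient.algHom_mk_eq_mk_comp σ hσ (C (a ^ m) * X), mul_comp, C_comp, X_comp,
      ← mul_assoc, ← C_mul, pow_succ]

theorem sum_range_C_pow_mul_X_pow_eq_C_mul {F : Type*} [Field F] {n : ℕ} {α : F}
    (hα : IsPrimitiveRoot α n) (e : ℕ → F[X]) (hdeg : ∀ k < n, (e k).degree < n)
    (heval : ∀ k < n, ∀ i < n, (e k).eval (α ^ i) = if i = k then 1 else 0) (m : ℕ) :
    ∑ i ∈ Finset.range n, (C (α ^ m) * X) ^ i = C (n : F) * e ((n - m % n) % n) := by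
  rcases n.eq_zero_or_pos with rfl | hn0
  · simp
  have hk : (n - m % n) % n < n := Nat.mod_lt _ hn0
  refine hα.eq_of_degree_lt_of_eval_pow_eq (Polynomial.degree_sum_range_C_mul_X_pow_lt _ n)
    (by rw [← smul_eq_C_mul]; exact (degree_smul_le _ _).trans_lt (hdeg _ hk)) fun j hj => ?_
  simp only [eval_finsetSum, eval_pow, eval_mul, eval_C, eval_X, ← pow_add,
    hα.geom_sum_pow_eq_ite, heval _ hk j hj, Nat.dvd_add_iff_eq_sub_mod_mod hj]
  split_ifs <;> simp

theorem stmt16_general (F : Type*) [Field F] (n δ : ℕ) (α : F)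
    (hord : orderOf α = n)
    (e : ℕ → Polynomial F)
    (hdeg : ∀ k < n, (e k).degree < n)
    (heval : ∀ k < n, ∀ i < n, Polynomial.eval (α ^ i) (e k) = if i = k then 1 else 0)
    (σ : (Polynomial F ⧸ Ideal.span {Polynomial.X ^ n - 1}) ≃ₐ[F]
         (Polynomial F ⧸ Ideal.span {Polynomial.X ^ n - 1}))
    (hσ : σ (Ideal.Quotient.mk (Ideal.span {Polynomial.X ^ n - 1}) Polynomial.X)
        = Ideal.Quotient.mk (Ideal.span {Polynomial.X ^ n - 1})
            (Polynomial.C α * Polynomial.X)) :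
    ∀ ν ≤ δ,
      Ideal.Quotient.mk (Ideal.span {Polynomial.X ^ n - 1})
          (∑ i ∈ Finset.range n, (Polynomial.C (α ^ ν) * Polynomial.X) ^ i)
        = Ideal.Quotient.mk (Ideal.span {Polynomial.X ^ n - 1}) (Polynomial.C (n : F))
            * (⇑σ)^[ν] (Ideal.Quotient.mk (Ideal.span {Polynomial.X ^ n - 1}) (e 0)) ∧
      Ideal.Quotient.mk (Ideal.span {Polynomial.X ^ n - 1})
          (∑ i ∈ Finset.range n, (Polynomial.C (α ^ ν) * Polynomial.X) ^ i)
        = Ideal.Quotient.mk (Ideal.span {Polynomial.X ^ n - 1})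
            (Polynomial.C (n : F) * e ((n - ν % n) % n)) := by
  intro ν _
  set mk := Ideal.Quotient.mk (Ideal.span {(X : F[X]) ^ n - 1})
  have hα : IsPrimitiveRoot α n := hord ▸ IsPrimitiveRoot.orderOf α
  have hg := sum_range_C_pow_mul_X_pow_eq_C_mul hα e hdeg heval
  have hσν := Ideal.Quotient.algHom_mk_eq_mk_comp (σ ^ ν)
    (AlgEquiv.pow_apply_mk_X_of_apply_mk_X σ hσ ν)
  refine ⟨?_, congrArg mk (hg ν)⟩
  calc mk (∑ i ∈ Finset.range n, (C (α ^ ν) * X) ^ i)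
      = mk ((∑ i ∈ Finset.range n, (C (α ^ 0) * X) ^ i).comp (C (α ^ ν) * X)) := by
        simp
    _ = mk (C (n : F)) * (σ ^ ν) (mk (e 0)) := by
        rw [← hσν, hg 0, map_mul, map_mul, hσν (C _), C_comp, Nat.zero_mod, Nat.sub_zero,
          Nat.mod_self]
    _ = mk (C (n : F)) * (⇑σ)^[ν] (mk (e 0)) := by rw [AlgEquiv.coe_pow]

/-- Setup as in the previous statements: `A = F[x]/(x^n - 1)`, `n` coprime
to `char F`, `ord(α) = n`, `σ(x) = αx`, and `ε_0, …, ε_{n-1}` the primitive idempotents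
(classes of polynomials `e k` of degree `< n` with `(e k)(α^i) = δ_{k,i}`).  In the skew
ring `A[z;σ]`, the element `g = Σ_{ν=0}^{δ} z^ν g_ν` with `g_ν = Σ_{i=0}^{n-1} α^{νi} x^i`
satisfies `g = n ε_0 Σ_{ν=0}^{δ} z^ν = n Σ_{ν=0}^{δ} z^ν ε_{(n-ν) mod n}`;
coefficientwise: `g_ν = n σ^ν(ε_0) = n ε_{(n-ν) mod n}` in `A` for all `ν ≤ δ`. -/
theorem stmt16 (F : Type*) [Field F] (n δ : ℕ) (hn0 : 0 < n) (α : F)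
    (hord : orderOf α = n) (hn : (n : F) ≠ 0)
    (e : ℕ → Polynomial F)
    (hdeg : ∀ k < n, (e k).degree < n)
    (heval : ∀ k < n, ∀ i < n, Polynomial.eval (α ^ i) (e k) = if i = k then 1 else 0)
    (σ : (Polynomial F ⧸ Ideal.span {Polynomial.X ^ n - 1}) ≃ₐ[F]
         (Polynomial F ⧸ Ideal.span {Polynomial.X ^ n - 1}))
    (hσ : σ (Ideal.Quotient.mk (Ideal.span {Polynomial.X ^ n - 1}) Polynomial.X)
        = Ideal.Quotient.mk (Ideal.span {Polynomial.X ^ n - 1})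
            (Polynomial.C α * Polynomial.X)) :
    ∀ ν ≤ δ,
      Ideal.Quotient.mk (Ideal.span {Polynomial.X ^ n - 1})
          (∑ i ∈ Finset.range n, (Polynomial.C (α ^ ν) * Polynomial.X) ^ i)
        = Ideal.Quotient.mk (Ideal.span {Polynomial.X ^ n - 1}) (Polynomial.C (n : F))
            * (⇑σ)^[ν] (Ideal.Quotient.mk (Ideal.span {Polynomial.X ^ n - 1}) (e 0)) ∧
      Ideal.Quotient.mk (Ideal.span {Polynomial.X ^ n - 1})
          (∑ i ∈ Finset.range n, (Polynomial.C (α ^ ν) * Polynomial.X) ^ i)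
        = Ideal.Quotient.mk (Ideal.span {Polynomial.X ^ n - 1})
            (Polynomial.C (n : F) * e ((n - ν % n) % n)) :=
  stmt16_general F n δ α hord e hdeg heval σ hσ
end

section
/- Let F be a field, n coprime to char F, α ∈ F with ord(α)=n, A = F[x]/(x^n−1), σ(x)=αx, and ε_k the primitive idempotents. Then for 1 ≤ δ ≤ n, in A[z;σ]: (1+zε_{n−1})(1+zε_{n−2})⋯(1+zε_{n−δ}) = 1 + z Σ_{k=n−δ}^{n−1} ε_k + z^2 Σ_{k=n−δ}^{n−2} ε_k + … + z^δ Σ_{k=n−δ}^{n−δ} ε_k, and ε_0 times this product equals ε_0 Σ_{ν=0}^{δ} z^ν. -/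
open Polynomial

/-- The quotient ring `A = F[x]/(x^n - 1)`. -/
abbrev ringA (F : Type*) [Field F] (n : ℕ) :=
  Polynomial F ⧸ Ideal.span {(Polynomial.X : Polynomial F) ^ n - 1}

/-- Multiplication in the skew polynomial ring `A[z;σ]` with commutation rule
`a z = z σ(a)`, written on coefficient sequences: for `f = Σ z^i f_i` and
`g = Σ z^t g_t`, the coefficient of `z^m` in `f·g` is `Σ_{i+t=m} σ^t(f_i) g_t`. -/
noncomputable def skewMul {A : Type*} [Ring A] (σ : A → A) (f g : ℕ → A) : ℕ → A :=
  fun m => ∑ t ∈ Finset.range (m + 1), σ^[t] (f (m - t)) * g t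

/-- The identity element `1` of `A[z;σ]` as a coefficient sequence. -/
noncomputable def skewOne (A : Type*) [Ring A] : ℕ → A :=
  fun m => if m = 0 then 1 else 0


/-!
Left multiplication by `1 + z a` sends a coefficient sequence `g` to the sequence whose
`z^(m+1)`-coefficient is `σ^m(a) g_m + g_(m+1)`. For `a = ε_(b+l)` one has
`σ^m(ε_(b+l)) = ε_(b+l-m)`, and by orthogonality `ε_(b+l-m)` times the old coefficient
`∑_{k=b}^{b+l-m} ε_k` is `ε_(b+l-m)` itself: each coefficient sum grows by exactly one term,
which gives the product formula by induction on the number of factors. Multiplying on the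
left by `ε_0` turns the `z^m`-coefficient `c` into `σ^m(ε_0) c = ε_(n-m) c`, and `ε_(n-m)`
absorbs the sum `∑_{k=n-δ}^{n-m} ε_k`. In `F[x]/(x^n - 1)` two classes agree as soon as
their representatives agree at the `n` distinct roots `α^i`, so orthogonality and
`σ(ε_k) = ε_(k-1)` reduce to evaluating the `e k` at powers of `α`.
-/

section Iterate

variable {β : Type*} (f : β → β) {n : ℕ} {ε : ℕ → β}

lemma iterate_apply_add_of_shift (hshift : ∀ k, k + 1 < n → f (ε (k + 1)) = ε k)
    {k : ℕ} (m : ℕ) (h : k + m < n) : f^[m] (ε (k + m)) = ε k := by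
  induction m generalizing k with
  | zero => rfl
  | succ m ih =>
    rw [Function.iterate_succ_apply, ← add_assoc, hshift (k + m) (by omega)]
    exact ih (by omega)

lemma iterate_apply_zero_of_shift (hshift : ∀ k, k + 1 < n → f (ε (k + 1)) = ε k)
    (hwrap : f (ε 0) = ε (n - 1)) {m : ℕ} (hm : 1 ≤ m) (hmn : m ≤ n) :
    f^[m] (ε 0) = ε (n - m) := by
  obtain ⟨m, rfl⟩ := Nat.exists_eq_add_of_le' hm
  rw [Function.iterate_succ_apply, hwrap,
    show n - 1 = n - (m + 1) + m by omega, iterate_apply_add_of_shift f hshift m (by omega)]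

end Iterate

section SkewPolynomial

variable {A : Type*} [Ring A]

def skewC (a : A) : ℕ → A :=
  fun m => if m = 0 then a else 0

def skewOneAddZMul (a : A) : ℕ → A :=
  fun m => if m = 0 then 1 else if m = 1 then a else 0

variable {G : Type*} [FunLike G A A] [RingHomClass G A A] (σ : G)

lemma skewMul_skewC_apply (a : A) (g : ℕ → A) (m : ℕ) :
    skewMul σ (skewC a) g m = σ^[m] a * g m := by
  rw [skewMul, Finset.sum_eq_single_of_mem m (Finset.self_mem_range_succ m)]
  · simp [skewC]
  · intro t ht htm
    rw [Finset.mem_range] at ht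
    rw [skewC, if_neg (by omega), Function.iterate_fixed (map_zero σ), zero_mul]

lemma skewMul_skewOneAddZMul_zero (a : A) (g : ℕ → A) :
    skewMul σ (skewOneAddZMul a) g 0 = g 0 := by
  simp [skewMul, skewOneAddZMul]

lemma skewMul_skewOneAddZMul_succ (a : A) (g : ℕ → A) (m : ℕ) :
    skewMul σ (skewOneAddZMul a) g (m + 1) = σ^[m] a * g m + g (m + 1) := by
  rw [skewMul, Finset.sum_range_succ, Finset.sum_range_succ, Finset.sum_eq_zero]
  · simp [skewOneAddZMul, Function.iterate_fixed (map_one σ)]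
  · intro t ht
    rw [Finset.mem_range] at ht
    rw [skewOneAddZMul, if_neg (by omega), if_neg (by omega),
      Function.iterate_fixed (map_zero σ), zero_mul]

variable {n : ℕ} {ε : ℕ → A}

lemma mul_sum_Icc_of_mem (hε : ∀ j < n, ∀ k < n, ε j * ε k = if j = k then ε j else 0)
    {i a b : ℕ} (hb : b < n) (hi : i ∈ Finset.Icc a b) :
    ε i * ∑ k ∈ Finset.Icc a b, ε k = ε i := by
  have hin : i < n := (Finset.mem_Icc.1 hi).2.trans_lt hb
  rw [Finset.mul_sum, Finset.sum_congr rfl fun k hk =>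
    hε i hin k ((Finset.mem_Icc.1 hk).2.trans_lt hb), Finset.sum_ite_eq, if_pos hi]

/-- The product `(1 + z ε_(b+l-1)) ⋯ (1 + z ε_b)`. -/
theorem foldr_skewMul_skewOneAddZMul
    (hε : ∀ j < n, ∀ k < n, ε j * ε k = if j = k then ε j else 0)
    (hshift : ∀ k, k + 1 < n → σ (ε (k + 1)) = ε k) {b l : ℕ} (hbl : b + l ≤ n) :
    ((List.range' b l).reverse.map fun k => skewOneAddZMul (ε k)).foldr (skewMul σ)
        (skewOne A)
      = fun m => if m = 0 then 1 else if m ≤ l then ∑ k ∈ Finset.Icc b (b + l - m), ε k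
          else 0 := by
  induction l with
  | zero =>
    funext m
    by_cases hm : m = 0 <;> simp [skewOne, hm]
  | succ l ih =>
    simp only [List.range'_concat, List.reverse_append, List.reverse_singleton,
      List.singleton_append, List.map_cons, List.foldr_cons, one_mul, ih (by omega)]
    funext m
    cases m with
    | zero => simp [skewMul_skewOneAddZMul_zero]
    | succ m =>
      rw [skewMul_skewOneAddZMul_succ, if_neg m.succ_ne_zero, if_neg m.succ_ne_zero]
      rcases lt_or_ge l m with hlm | hml
      · simp [show m ≠ 0 by omega, show ¬ m ≤ l by omega, show ¬ m + 1 ≤ l by omega]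
      have hσm : σ^[m] (ε (b + l)) = ε (b + l - m) := by
        have := iterate_apply_add_of_shift σ hshift (k := b + l - m) m (by omega)
        rwa [Nat.sub_add_cancel (by omega)] at this
      have hfirst : σ^[m] (ε (b + l)) * (if m = 0 then 1 else if m ≤ l then
          ∑ k ∈ Finset.Icc b (b + l - m), ε k else 0) = ε (b + l - m) := by
        rw [hσm]
        split_ifs with hm0
        · rw [mul_one]
        · exact mul_sum_Icc_of_mem hε (by omega) (Finset.mem_Icc.2 ⟨by omega, le_rfl⟩)
      rw [hfirst, if_pos (show m + 1 ≤ l + 1 by omega),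
        show b + (l + 1) - (m + 1) = b + l - m by omega]
      rcases hml.lt_or_eq with hlt | rfl
      · rw [if_pos (show m + 1 ≤ l by omega), show b + l - m = b + l - (m + 1) + 1 by omega,
          Finset.sum_Icc_succ_top (by omega), add_comm]
      · rw [if_neg (show ¬ m + 1 ≤ m by omega), add_zero, Nat.add_sub_cancel, Finset.Icc_self,
          Finset.sum_singleton]

theorem skewMul_skewC_zero_sum_Icc_eq
    (hε : ∀ j < n, ∀ k < n, ε j * ε k = if j = k then ε j else 0)
    (hshift : ∀ k, k + 1 < n → σ (ε (k + 1)) = ε k) (hwrap : σ (ε 0) = ε (n - 1))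
    {δ : ℕ} (hδn : δ ≤ n) :
    skewMul σ (skewC (ε 0))
        (fun m => if m = 0 then 1 else if m ≤ δ then ∑ k ∈ Finset.Icc (n - δ) (n - m), ε k
          else 0)
      = skewMul σ (skewC (ε 0)) fun m => if m ≤ δ then 1 else 0 := by
  funext m
  rw [skewMul_skewC_apply, skewMul_skewC_apply]
  rcases Nat.eq_zero_or_pos m with rfl | hm
  · simp
  by_cases hmδ : m ≤ δ
  · rw [if_neg hm.ne', if_pos hmδ, if_pos hmδ, mul_one,
      iterate_apply_zero_of_shift σ hshift hwrap hm (hmδ.trans hδn)]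
    exact mul_sum_Icc_of_mem hε (by omega) (Finset.mem_Icc.2 ⟨by omega, le_rfl⟩)
  · rw [if_neg hm.ne', if_neg hmδ, if_neg hmδ]

end SkewPolynomial

section QuotientRing

variable {F : Type*} [Field F] {n : ℕ} {α : F}

lemma X_pow_sub_one_dvd_of_eval_pow_eq_zero (hn0 : 0 < n) (h : IsPrimitiveRoot α n)
    {p : F[X]} (hp : ∀ i < n, p.eval (α ^ i) = 0) : X ^ n - 1 ∣ p := by
  rcases eq_or_ne p 0 with rfl | hp0
  · exact dvd_zero _
  have : NeZero n := ⟨hn0.ne'⟩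
  rw [X_pow_sub_one_eq_prod hn0 h, Finset.prod_eq_multiset_prod,
    Multiset.prod_X_sub_C_dvd_iff_le_roots hp0,
    Multiset.le_iff_subset (nthRootsFinset n (1 : F)).nodup]
  intro a ha
  obtain ⟨i, hi, rfl⟩ := h.eq_pow_of_pow_eq_one ((mem_nthRootsFinset hn0 1).1 ha)
  exact (mem_roots hp0).2 (hp i hi)

lemma mk_eq_mk_of_eval_pow_eq (hn0 : 0 < n) (h : IsPrimitiveRoot α n) {p q : F[X]}
    (hpq : ∀ i < n, p.eval (α ^ i) = q.eval (α ^ i)) :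
    Ideal.Quotient.mk (Ideal.span {(X : F[X]) ^ n - 1}) p =
      Ideal.Quotient.mk (Ideal.span {(X : F[X]) ^ n - 1}) q := by
  rw [Ideal.Quotient.eq, Ideal.mem_span_singleton]
  exact X_pow_sub_one_dvd_of_eval_pow_eq_zero hn0 h fun i hi => by
    rw [eval_sub, hpq i hi, sub_self]

lemma algEquiv_mk_eq_mk_comp (σ : ringA F n ≃ₐ[F] ringA F n)
    (hσ : σ (Ideal.Quotient.mk (Ideal.span {Polynomial.X ^ n - 1}) Polynomial.X)
        = Ideal.Quotient.mk (Ideal.span {Polynomial.X ^ n - 1})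
            (Polynomial.C α * Polynomial.X)) (p : F[X]) :
    σ (Ideal.Quotient.mk (Ideal.span {(X : F[X]) ^ n - 1}) p)
      = Ideal.Quotient.mk (Ideal.span {(X : F[X]) ^ n - 1}) (p.comp (C α * X)) := by
  have hcomp : (σ.toAlgHom.comp (Ideal.Quotient.mkₐ F (Ideal.span {(X : F[X]) ^ n - 1})))
      = (Ideal.Quotient.mkₐ F (Ideal.span {(X : F[X]) ^ n - 1})).comp (aeval (C α * X)) :=
    algHom_ext (by simpa using hσ)
  simpa [comp_eq_aeval] using AlgHom.congr_fun hcomp p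

lemma algEquiv_mk_eq_mk_of_eval_pow_succ (hn0 : 0 < n) (h : IsPrimitiveRoot α n)
    (σ : ringA F n ≃ₐ[F] ringA F n)
    (hσ : σ (Ideal.Quotient.mk (Ideal.span {Polynomial.X ^ n - 1}) Polynomial.X)
        = Ideal.Quotient.mk (Ideal.span {Polynomial.X ^ n - 1})
            (Polynomial.C α * Polynomial.X)) {p q : F[X]}
    (hpq : ∀ i < n, p.eval (α ^ (i + 1)) = q.eval (α ^ i)) :
    σ (Ideal.Quotient.mk (Ideal.span {(X : F[X]) ^ n - 1}) p)
      = Ideal.Quotient.mk (Ideal.span {(X : F[X]) ^ n - 1}) q := by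
  rw [algEquiv_mk_eq_mk_comp σ hσ]
  exact mk_eq_mk_of_eval_pow_eq hn0 h fun i hi => by
    rw [eval_comp, eval_mul, eval_C, eval_X, ← pow_succ', hpq i hi]

variable {e : ℕ → F[X]}

lemma mk_mul_mk_eq_ite (hn0 : 0 < n) (h : IsPrimitiveRoot α n)
    (heval : ∀ k < n, ∀ i < n, (e k).eval (α ^ i) = if i = k then 1 else 0)
    {j k : ℕ} (hj : j < n) (hk : k < n) :
    Ideal.Quotient.mk (Ideal.span {(X : F[X]) ^ n - 1}) (e j) *
        Ideal.Quotient.mk (Ideal.span {(X : F[X]) ^ n - 1}) (e k)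
      = if j = k then Ideal.Quotient.mk (Ideal.span {(X : F[X]) ^ n - 1}) (e j) else 0 := by
  rw [← map_mul, ← map_zero (Ideal.Quotient.mk _), ← apply_ite]
  refine mk_eq_mk_of_eval_pow_eq hn0 h fun i hi => ?_
  rw [eval_mul, heval j hj i hi, heval k hk i hi]
  split_ifs <;> simp_all

lemma eval_pow_succ_eq_ite (hn0 : 0 < n) (h : IsPrimitiveRoot α n)
    (heval : ∀ k < n, ∀ i < n, (e k).eval (α ^ i) = if i = k then 1 else 0)
    {i k : ℕ} (hi : i < n) (hk : k < n) :
    (e k).eval (α ^ (i + 1)) = if i + 1 = k ∨ i + 1 = n ∧ k = 0 then 1 else 0 := by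
  rcases (show i + 1 ≤ n from hi).lt_or_eq with hlt | heq
  · rw [heval k hk _ hlt]
    exact if_congr (by omega) rfl rfl
  · have heval0 := heval k hk 0 hn0
    rw [pow_zero] at heval0
    rw [heq, h.pow_eq_one, heval0]
    exact if_congr (by omega) rfl rfl

end QuotientRing

theorem stmt18_general (F : Type*) [Field F] (n : ℕ) (hn0 : 0 < n) (α : F)
    (hord : orderOf α = n)
    (e : ℕ → Polynomial F)
    (heval : ∀ k < n, ∀ i < n, Polynomial.eval (α ^ i) (e k) = if i = k then 1 else 0)
    (σ : ringA F n ≃ₐ[F] ringA F n)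
    (hσ : σ (Ideal.Quotient.mk (Ideal.span {Polynomial.X ^ n - 1}) Polynomial.X)
        = Ideal.Quotient.mk (Ideal.span {Polynomial.X ^ n - 1})
            (Polynomial.C α * Polynomial.X))
    (δ : ℕ) (hδn : δ ≤ n) :
    (((List.range δ).map (fun t => (fun m' => if m' = 0 then 1 else if m' = 1 then
        Ideal.Quotient.mk (Ideal.span {Polynomial.X ^ n - 1}) (e (n - (t + 1)))
      else 0 : ℕ → ringA F n))).foldr (skewMul ⇑σ) (skewOne (ringA F n)))
      = (fun m => if m = 0 then 1 else if m ≤ δ then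
          ∑ k ∈ Finset.Icc (n - δ) (n - m),
            Ideal.Quotient.mk (Ideal.span {Polynomial.X ^ n - 1}) (e k)
        else 0) ∧
    skewMul ⇑σ
        (fun m => if m = 0 then
          Ideal.Quotient.mk (Ideal.span {Polynomial.X ^ n - 1}) (e 0) else 0)
        (((List.range δ).map (fun t => (fun m' => if m' = 0 then 1 else if m' = 1 then
            Ideal.Quotient.mk (Ideal.span {Polynomial.X ^ n - 1}) (e (n - (t + 1)))
          else 0 : ℕ → ringA F n))).foldr (skewMul ⇑σ) (skewOne (ringA F n)))
      = skewMul ⇑σ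
          (fun m => if m = 0 then
            Ideal.Quotient.mk (Ideal.span {Polynomial.X ^ n - 1}) (e 0) else 0)
          (fun m => if m ≤ δ then 1 else 0) := by
  have h : IsPrimitiveRoot α n := hord ▸ IsPrimitiveRoot.orderOf α
  set ε : ℕ → ringA F n := fun k => Ideal.Quotient.mk (Ideal.span {X ^ n - 1}) (e k)
  have hε : ∀ j < n, ∀ k < n, ε j * ε k = if j = k then ε j else 0 :=
    fun j hj k hk => mk_mul_mk_eq_ite hn0 h heval hj hk
  have hshift : ∀ k, k + 1 < n → σ (ε (k + 1)) = ε k := fun k hk =>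
    algEquiv_mk_eq_mk_of_eval_pow_succ hn0 h σ hσ fun i hi => by
      rw [eval_pow_succ_eq_ite hn0 h heval hi hk, heval k (by omega) i hi]
      exact if_congr (by omega) rfl rfl
  have hwrap : σ (ε 0) = ε (n - 1) :=
    algEquiv_mk_eq_mk_of_eval_pow_succ hn0 h σ hσ fun i hi => by
      rw [eval_pow_succ_eq_ite hn0 h heval hi hn0, heval (n - 1) (by omega) i hi]
      exact if_congr (by omega) rfl rfl
  have hfactors : (List.range δ).map (fun t m' => if m' = 0 then 1 else if m' = 1 then
        ε (n - (t + 1)) else 0) =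
      (List.range' (n - δ) δ).reverse.map fun k => skewOneAddZMul (ε k) := by
    rw [List.reverse_range', List.map_map]
    congr 1
    funext t
    simp only [Function.comp_apply, Nat.sub_add_cancel hδn, Nat.sub_sub, Nat.add_comm 1 t]
    rfl
  have hprod := foldr_skewMul_skewOneAddZMul σ hε hshift (Nat.sub_add_cancel hδn).le
  simp only [Nat.sub_add_cancel hδn] at hprod
  rw [hfactors, hprod]
  exact ⟨rfl, skewMul_skewC_zero_sum_Icc_eq σ hε hshift hwrap hδn⟩

/-- With `A = F[x]/(x^n - 1)`, `n` coprime to `char F`, `ord(α) = n`,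
`σ(x) = αx`, and `ε_0, …, ε_{n-1}` the primitive idempotents (classes of polynomials
`e k` of degree `< n` with `(e k)(α^i) = δ_{k,i}`), one has in `A[z;σ]`, for `1 ≤ δ ≤ n`:
`(1 + zε_{n-1})(1 + zε_{n-2})⋯(1 + zε_{n-δ})
  = 1 + z Σ_{k=n-δ}^{n-1} ε_k + z² Σ_{k=n-δ}^{n-2} ε_k + … + z^δ Σ_{k=n-δ}^{n-δ} ε_k`,
and `ε_0` times this product equals `ε_0 Σ_{ν=0}^{δ} z^ν`. -/
theorem stmt18 (F : Type*) [Field F] (n : ℕ) (hn0 : 0 < n) (α : F)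
    (hord : orderOf α = n) (hn : (n : F) ≠ 0)
    (e : ℕ → Polynomial F)
    (hdeg : ∀ k < n, (e k).degree < n)
    (heval : ∀ k < n, ∀ i < n, Polynomial.eval (α ^ i) (e k) = if i = k then 1 else 0)
    (σ : ringA F n ≃ₐ[F] ringA F n)
    (hσ : σ (Ideal.Quotient.mk (Ideal.span {Polynomial.X ^ n - 1}) Polynomial.X)
        = Ideal.Quotient.mk (Ideal.span {Polynomial.X ^ n - 1})
            (Polynomial.C α * Polynomial.X))
    (δ : ℕ) (hδ1 : 1 ≤ δ) (hδn : δ ≤ n) :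
    (((List.range δ).map (fun t => (fun m' => if m' = 0 then 1 else if m' = 1 then
        Ideal.Quotient.mk (Ideal.span {Polynomial.X ^ n - 1}) (e (n - (t + 1)))
      else 0 : ℕ → ringA F n))).foldr (skewMul ⇑σ) (skewOne (ringA F n)))
      = (fun m => if m = 0 then 1 else if m ≤ δ then
          ∑ k ∈ Finset.Icc (n - δ) (n - m),
            Ideal.Quotient.mk (Ideal.span {Polynomial.X ^ n - 1}) (e k)
        else 0) ∧
    skewMul ⇑σ
        (fun m => if m = 0 then
          Ideal.Quotient.mk (Ideal.span {Polynomial.X ^ n - 1}) (e 0) else 0)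
        (((List.range δ).map (fun t => (fun m' => if m' = 0 then 1 else if m' = 1 then
            Ideal.Quotient.mk (Ideal.span {Polynomial.X ^ n - 1}) (e (n - (t + 1)))
          else 0 : ℕ → ringA F n))).foldr (skewMul ⇑σ) (skewOne (ringA F n)))
      = skewMul ⇑σ
          (fun m => if m = 0 then
            Ideal.Quotient.mk (Ideal.span {Polynomial.X ^ n - 1}) (e 0) else 0)
          (fun m => if m ≤ δ then 1 else 0) :=
  stmt18_general F n hn0 α hord e heval σ hσ δ hδn
end
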